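/- Let (α, β) be a Bailey pair relative to a = q^ℓ, where ℓ is a non-negative integer; i.e. β_L = Σ_{r=0}^{L} α_r / ((q)_{L-r} (q^{ℓ+1};q)_{L+r}) for all integers L ≥ 0. Then for every integer L ≥ 0 one has Σ_{s=0, s ≡ L+ℓ (mod 2)}^{L-ℓ} q^{s(s-1)/2} / ((q)_ℓ (q)_s) · β_{(L-s-ℓ)/2} = Σ_{r=0}^{⌊(L-ℓ)/2⌋} Q_1(L, 2r+ℓ, q) · α_r. (For ℓ > L both sides are empty sums, i.e. 0.) -/

import Mathlib

/-!
Substituting the Bailey relation for `β` and exchanging the two sums, the coefficient of `α r`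
on the left becomes a sum over `s ≡ L + ℓ (mod 2)`. Writing `A = 2r + ℓ` and `s = L - 2j - A`,
the identity `(q)_ℓ (q^(ℓ+1); q)_(j+2r) = (q)_(j+A)` turns its terms into
`q^(s(s-1)/2) / ((q)_j (q)_(j+A) (q)_s)`. The inversion `(q⁻¹; q⁻¹)_n = (-1)^n q^(-n(n+1)/2) (q)_n`
turns the `j`-th term of `((L; A-1; q⁻¹))_(A,2)` times `q^((L(L-1) - A(A-1))/2) / (q)_L` into the
same expression, so the coefficient is `Q_1(L, A, q)`.
-/

open Finset

noncomputable section

/-- The field `F = RatFunc ℚ` of rational functions over `ℚ` in the variable `t`,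
where `t` plays the role of `q^(1/2)`. -/
abbrev F : Type := RatFunc ℚ

/-- The variable `t = q^(1/2)`. -/
def t : F := RatFunc.X

/-- `q = t^2`. -/
def q : F := t ^ 2

/-- The Pochhammer symbol `(a; b)_n = ∏_{k=0}^{n-1} (1 - a bᵏ)`, set equal to `0` for
negative `n` (so that any term containing a factor `1/(a;b)_n` with `n < 0` vanishes). -/
def poch (b a : F) (n : ℤ) : F :=
  if n < 0 then 0 else ∏ k ∈ Finset.range n.toNat, (1 - a * b ^ k)

/-- The `q`-trinomial coefficient `((L; B; qq))_{A,2}` with base `qq`: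
`∑_j qq^(j(j+B)) (qq)_L / ((qq)_j (qq)_{j+A} (qq)_{L-2j-A})`; the sum is finite since
terms with a negative Pochhammer index in the denominator vanish. -/
def trinom (qq : F) (L : ℕ) (B A : ℤ) : F :=
  ∑ j ∈ Finset.range (L + 1),
    qq ^ ((j : ℤ) * ((j : ℤ) + B)) * poch qq qq (L : ℤ) /
      (poch qq qq (j : ℤ) * poch qq qq ((j : ℤ) + A) *
        poch qq qq ((L : ℤ) - 2 * (j : ℤ) - A))

/-- `T_n(L, A, q) = q^((L(L-n) - A(A-n))/2) ((L; A-n; q⁻¹))_{A,2}`; note `t ^ m = q ^ (m/2)`. -/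
def T (n : ℤ) (L : ℕ) (A : ℤ) : F :=
  t ^ ((L : ℤ) * ((L : ℤ) - n) - A * (A - n)) * trinom q⁻¹ L (A - n) A

/-- `Q_n(L, A, q) = T_n(L, A, q) / (q)_L`. -/
def Q (n : ℤ) (L : ℕ) (A : ℤ) : F := T n L A / poch q q (L : ℤ)

lemma poch_natCast (b a : F) (n : ℕ) :
    poch b a n = ∏ k ∈ range n, (1 - a * b ^ k) := by
  simp [poch]

lemma poch_of_neg {b a : F} {n : ℤ} (hn : n < 0) : poch b a n = 0 := if_pos hn

lemma poch_add (b a : F) (m n : ℕ) :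
    poch b a ((m + n : ℕ) : ℤ) = poch b a m * poch b (a * b ^ m) n := by
  simp only [poch_natCast, prod_range_add, pow_add, mul_assoc]

lemma poch_ne_zero {b a : F} {n : ℕ} (h : ∀ k < n, a * b ^ k ≠ 1) : poch b a n ≠ 0 := by
  rw [poch_natCast]
  exact prod_ne_zero_iff.2 fun k hk => sub_ne_zero.2 (h k (mem_range.1 hk)).symm

lemma poch_succ (b a : F) (n : ℕ) :
    poch b a ((n + 1 : ℕ) : ℤ) = poch b a n * (1 - a * b ^ n) := by
  simp only [poch_natCast, prod_range_succ]

lemma poch_inv_sq {c : F} (hc : c ≠ 0) (n : ℕ) :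
    poch (c ^ 2)⁻¹ (c ^ 2)⁻¹ n =
      (-1) ^ n * c ^ (-(n * (n + 1) : ℤ)) * poch (c ^ 2) (c ^ 2) n := by
  induction n with
  | zero => simp [poch]
  | succ n ih =>
    have hexp : -(((n + 1 : ℕ) : ℤ) * ((n + 1 : ℕ) + 1)) =
        -(n * (n + 1) : ℤ) - 2 * ((n + 1 : ℕ) : ℤ) := by
      push_cast; ring
    rw [poch_succ, poch_succ, ih, hexp, zpow_sub₀ hc, zpow_mul, zpow_natCast, inv_pow, ← mul_inv,
      ← pow_succ']
    field_simp
    ring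

lemma t_ne_zero : t ≠ 0 := RatFunc.X_ne_zero

lemma t_pow_ne_one {m : ℕ} (hm : m ≠ 0) : t ^ m ≠ 1 := by
  intro h
  have h1 : (Polynomial.X : Polynomial ℚ) ^ m = 1 :=
    RatFunc.algebraMap_injective ℚ (by rwa [map_pow, map_one, RatFunc.algebraMap_X])
  simpa [hm] using congrArg Polynomial.natDegree h1

lemma poch_q_ne_zero (n : ℕ) : poch q q n ≠ 0 :=
  poch_ne_zero fun k _ => by
    rw [q, ← pow_succ', ← pow_mul]; exact t_pow_ne_one (by omega)

lemma poch_q_inv (n : ℕ) :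
    poch q⁻¹ q⁻¹ n = (-1) ^ n * t ^ (-(n * (n + 1) : ℤ)) * poch q q n :=
  poch_inv_sq t_ne_zero n

lemma q_inv_zpow (e : ℤ) : q⁻¹ ^ e = t ^ (-(2 * e)) := by
  rw [q, inv_zpow', ← zpow_natCast, ← zpow_mul]; push_cast; ring_nf

lemma trinom_summand_eq {j A c L : ℕ} (hL : 2 * j + A + c = L) :
    t ^ ((L : ℤ) * ((L : ℤ) - 1) - (A : ℤ) * ((A : ℤ) - 1)) *
      (q⁻¹ ^ ((j : ℤ) * ((j : ℤ) + ((A : ℤ) - 1))) * poch q⁻¹ q⁻¹ (L : ℤ) /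
        (poch q⁻¹ q⁻¹ (j : ℤ) * poch q⁻¹ q⁻¹ ((j : ℤ) + (A : ℤ)) *
          poch q⁻¹ q⁻¹ ((L : ℤ) - 2 * (j : ℤ) - (A : ℤ)))) / poch q q (L : ℤ) =
    t ^ ((c : ℤ) * ((c : ℤ) - 1)) / (poch q q j * poch q q ((j + A : ℕ) : ℤ) * poch q q c) := by
  have hjA : (j : ℤ) + A = ((j + A : ℕ) : ℤ) := by push_cast; ring
  have hc : (L : ℤ) - 2 * j - A = c := by omega
  have hsign : ((-1 : F) ^ L) = (-1) ^ j * (-1) ^ (j + A) * (-1) ^ c := by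
    rw [← pow_add, ← pow_add]; congr 1; omega
  have := poch_q_ne_zero L; have := poch_q_ne_zero j; have := poch_q_ne_zero (j + A)
  have := poch_q_ne_zero c; have := t_ne_zero
  rw [hjA, hc, q_inv_zpow, poch_q_inv, poch_q_inv, poch_q_inv, poch_q_inv, hsign]
  field_simp
  simp only [← zpow_add₀ t_ne_zero]
  congr 1
  push_cast [← hL]
  ring

lemma Q_one_eq_sum (L A : ℕ) :
    Q 1 L A = ∑ j ∈ range (L + 1), if 2 * j + A ≤ L then
      t ^ (((L - 2 * j - A : ℕ) : ℤ) * ((L - 2 * j - A : ℕ) - 1)) /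
        (poch q q j * poch q q ((j + A : ℕ) : ℤ) * poch q q (L - 2 * j - A : ℕ))
      else 0 := by
  rw [Q, T, trinom, mul_sum, sum_div]
  refine sum_congr rfl fun j _ => ?_
  split_ifs with hj
  · exact trinom_summand_eq (by omega)
  · rw [poch_of_neg (b := q⁻¹) (by omega : (L : ℤ) - 2 * j - A < 0)]
    simp

lemma Q_one_eq_zero_of_lt {L A : ℕ} (h : L < A) : Q 1 L A = 0 := by
  rw [Q_one_eq_sum]
  exact sum_eq_zero fun j _ => if_neg (by omega)

lemma sum_range_ite_parity {M : Type*} [AddCommMonoid M] (L A : ℕ) (f : ℕ → ℕ → M) :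
    (∑ s ∈ range (L + 1), if s + A ≤ L ∧ (s + L + A) % 2 = 0 then f ((L - s - A) / 2) s else 0) =
      ∑ j ∈ range (L + 1), if 2 * j + A ≤ L then f j (L - 2 * j - A) else 0 := by
  rw [← sum_filter, ← sum_filter]
  refine sum_nbij' (fun s => (L - s - A) / 2) (fun j => L - 2 * j - A) ?_ ?_ ?_ ?_ ?_ <;>
    intro x hx <;> simp only [mem_filter, mem_range] at hx ⊢
  · omega
  · omega
  · omega
  · omega
  · congr 1; omega

/-- `(q)_(m-r) (a q; q)_(m+r)` with `a = q^ℓ`, the denominator of the Bailey relation. -/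
def baileyDenom (ℓ m r : ℕ) : F := poch q q ((m : ℤ) - r) * poch q (q ^ (ℓ + 1)) ((m : ℤ) + r)

lemma baileyDenom_eq_zero_of_lt {ℓ m r : ℕ} (h : m < r) : baileyDenom ℓ m r = 0 := by
  rw [baileyDenom, poch_of_neg (by omega), zero_mul]

lemma baileyDenom_add (ℓ j r : ℕ) :
    poch q q ℓ * baileyDenom ℓ (j + r) r = poch q q j * poch q q ((j + (2 * r + ℓ) : ℕ) : ℤ) := by
  have hj : ((j + r : ℕ) : ℤ) - r = j := by omega
  have hjr : ((j + r : ℕ) : ℤ) + r = ((j + 2 * r : ℕ) : ℤ) := by omega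
  rw [baileyDenom, hj, hjr, show j + (2 * r + ℓ) = ℓ + (j + 2 * r) by ring, poch_add q q ℓ,
    ← pow_succ']
  ring

lemma sum_range_div_baileyDenom_of_le (ℓ : ℕ) (f : ℕ → F) {m n : ℕ} (h : m ≤ n) :
    ∑ r ∈ range (m + 1), f r / baileyDenom ℓ m r = ∑ r ∈ range (n + 1), f r / baileyDenom ℓ m r :=
  sum_subset (range_subset_range.2 (by omega)) fun r _ hr => by
    rw [baileyDenom_eq_zero_of_lt (by simpa using hr), div_zero]

lemma sum_weight_div_baileyDenom (ℓ L r : ℕ) :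
    (∑ s ∈ range (L + 1), if (s : ℤ) ≤ (L : ℤ) - (ℓ : ℤ) ∧ (s + L + ℓ) % 2 = 0 then
        t ^ ((s : ℤ) * ((s : ℤ) - 1)) / (poch q q (ℓ : ℤ) * poch q q (s : ℤ)) /
          baileyDenom ℓ ((L - s - ℓ) / 2) r
      else 0) = Q 1 L ((2 * r + ℓ : ℕ) : ℤ) := by
  rw [Q_one_eq_sum, ← sum_range_ite_parity L (2 * r + ℓ) fun j c =>
    t ^ ((c : ℤ) * ((c : ℤ) - 1)) /
      (poch q q j * poch q q ((j + (2 * r + ℓ) : ℕ) : ℤ) * poch q q c)]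
  refine sum_congr rfl fun s _ => ?_
  by_cases hs : s + (2 * r + ℓ) ≤ L ∧ (s + L + (2 * r + ℓ)) % 2 = 0
  · have hm : (L - s - ℓ) / 2 = (L - s - (2 * r + ℓ)) / 2 + r := by omega
    rw [if_pos (by omega), if_pos hs, hm, div_div, mul_right_comm, baileyDenom_add]
  · rw [if_neg hs]
    split_ifs
    · rw [baileyDenom_eq_zero_of_lt (by omega), div_zero]
    · rfl

/-- Lemma 2 of Warnaar's note, case `n = 1`: each ordinary Bailey pair relative to
`a = q^ℓ` gives rise to the stated trinomial identity. -/
theorem binomial_to_trinomial_n_one (ℓ : ℕ) (α β : ℕ → F)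
    (hBP : ∀ L : ℕ, β L = ∑ r ∈ Finset.range (L + 1),
      α r / (poch q q ((L : ℤ) - (r : ℤ)) * poch q (q ^ (ℓ + 1)) ((L : ℤ) + (r : ℤ)))) :
    ∀ L : ℕ,
      (∑ s ∈ Finset.range (L + 1),
        if (s : ℤ) ≤ (L : ℤ) - (ℓ : ℤ) ∧ (s + L + ℓ) % 2 = 0 then
          t ^ ((s : ℤ) * ((s : ℤ) - 1)) / (poch q q (ℓ : ℤ) * poch q q (s : ℤ)) *
            β ((L - s - ℓ) / 2)
        else 0) =
      ∑ r ∈ Finset.range (L + 1),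
        if 2 * r + ℓ ≤ L then Q 1 L (2 * (r : ℤ) + (ℓ : ℤ)) * α r else 0 := by
  intro L
  have hβ : ∀ m, β m = ∑ r ∈ range (m + 1), α r / baileyDenom ℓ m r := hBP
  have hexpand : ∀ s ∈ range (L + 1),
      (if (s : ℤ) ≤ (L : ℤ) - (ℓ : ℤ) ∧ (s + L + ℓ) % 2 = 0 then
          t ^ ((s : ℤ) * ((s : ℤ) - 1)) / (poch q q (ℓ : ℤ) * poch q q (s : ℤ)) *
            β ((L - s - ℓ) / 2)
        else 0) =
      ∑ r ∈ range (L + 1),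
        (if (s : ℤ) ≤ (L : ℤ) - (ℓ : ℤ) ∧ (s + L + ℓ) % 2 = 0 then
          t ^ ((s : ℤ) * ((s : ℤ) - 1)) / (poch q q (ℓ : ℤ) * poch q q (s : ℤ)) /
            baileyDenom ℓ ((L - s - ℓ) / 2) r
        else 0) * α r := by
    intro s _
    split_ifs
    · rw [hβ, sum_range_div_baileyDenom_of_le ℓ α (by omega : (L - s - ℓ) / 2 ≤ L), mul_sum]
      exact sum_congr rfl fun r _ => by ring
    · simp
  rw [sum_congr rfl hexpand, sum_comm]
  refine sum_congr rfl fun r _ => ?_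
  rw [← sum_mul, sum_weight_div_baileyDenom]
  split_ifs with h
  · push_cast; rfl
  · rw [Q_one_eq_zero_of_lt (by omega), zero_mul]

end
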